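/- There exist constants c₁, c₂ > 0, depending only on d and m_φ, such that for all n ∈ ℕ₀ the function p_n(x) := (1/n!) Σ_{H∈𝒢_n} κ_n(H) J_n(H,x) satisfies ‖p_n‖∞ ≤ c₁·c₂^n and ‖p_n‖₁ ≤ c₁·c₂^n. (These p_n are the coefficients of the power-series expansion of the pair-connectedness function P_t of the random connection model at intensity t = 0.) -/

import Mathlib

open MeasureTheory Finset
open scoped ENNReal Classical

noncomputable section

/-- The interior vertices `{1,…,n}` of the vertex set `{0,1,…,n+1}` (as `Fin (n+2)`). -/
def interiorVerts (n : ℕ) : Finset (Fin (n + 2)) :=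
  Finset.univ.filter fun v => v ≠ 0 ∧ v ≠ Fin.last (n + 1)

/-- `ConnIn G a b S` : there is a path from `a` to `b` in `G` using only
vertices in `S ∪ {a, b}`. -/
def ConnIn {k : ℕ} (G : SimpleGraph (Fin k)) (a b : Fin k) (S : Set (Fin k)) : Prop :=
  ∃ w : G.Walk a b, ∀ v ∈ w.support, v = a ∨ v = b ∨ v ∈ S

/-- `π_n(G) = Σ_{I ⊆ [n]} (-1)^{n-|I|} 1{0 ↔ n+1 in G|I}`. -/
def piFun (n : ℕ) (G : SimpleGraph (Fin (n + 2))) : ℤ :=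
  ∑ I ∈ (interiorVerts n).powerset,
    (-1 : ℤ) ^ (n - I.card) *
      (if ConnIn G 0 (Fin.last (n + 1)) ↑I then 1 else 0)

/-- The number of edges of `G`, counted via ordered pairs `i < j`. -/
def edgeCount {k : ℕ} (G : SimpleGraph (Fin k)) : ℕ :=
  (Finset.univ.filter fun p : Fin k × Fin k => p.1 < p.2 ∧ G.Adj p.1 p.2).card

/-- `κ_n(H) = Σ_{G ∈ 𝒢_n, E(G) ⊆ E(H)} (-1)^{|E(H)|-|E(G)|} π_n(G)`. -/
def kappaFun (n : ℕ) (H : SimpleGraph (Fin (n + 2))) : ℤ :=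
  ∑ G ∈ Finset.univ.filter
      (fun G : SimpleGraph (Fin (n + 2)) => G.Connected ∧ G ≤ H),
    (-1 : ℤ) ^ (edgeCount H - edgeCount G) * piFun n G

/-- The point configuration `x₀ = 0`, `x₁,…,x_n = xs`, `x_{n+1} = x`. -/
def pts {d n : ℕ} (x : EuclideanSpace ℝ (Fin d)) (xs : Fin n → EuclideanSpace ℝ (Fin d)) :
    Fin (n + 2) → EuclideanSpace ℝ (Fin d) :=
  Fin.cons 0 (Fin.snoc xs x)

/-- `∏_{{i,j} ∈ E(G)} φ(y_i - y_j)`, product over ordered pairs `i < j`. -/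
def edgeProd {d k : ℕ} (φ : EuclideanSpace ℝ (Fin d) → ℝ)
    (G : SimpleGraph (Fin k)) (y : Fin k → EuclideanSpace ℝ (Fin d)) : ℝ :=
  ∏ p ∈ Finset.univ.filter (fun p : Fin k × Fin k => p.1 < p.2 ∧ G.Adj p.1 p.2),
    φ (y p.1 - y p.2)

/-- `J_n(G,x) = ∫ ∏_{{i,j} ∈ E(G)} φ(x_i - x_j) d(x₁,…,x_n)` with `x₀ = 0`, `x_{n+1} = x`. -/
def Jfun {d : ℕ} (φ : EuclideanSpace ℝ (Fin d) → ℝ) (n : ℕ)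
    (G : SimpleGraph (Fin (n + 2))) (x : EuclideanSpace ℝ (Fin d)) : ℝ :=
  ∫ xs : Fin n → EuclideanSpace ℝ (Fin d), edgeProd φ G (pts x xs)

/-- `I_n(G,x) = ∫ ∏_{{i,j} ∈ E(G)} φ(x_i-x_j) ∏_{{i,j} ∉ E(G)} (1 - φ(x_i-x_j)) d(x₁,…,x_n)`. -/
def Ifun {d : ℕ} (φ : EuclideanSpace ℝ (Fin d) → ℝ) (n : ℕ)
    (G : SimpleGraph (Fin (n + 2))) (x : EuclideanSpace ℝ (Fin d)) : ℝ :=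
  ∫ xs : Fin n → EuclideanSpace ℝ (Fin d),
    edgeProd φ G (pts x xs) *
      ∏ p ∈ Finset.univ.filter
          (fun p : Fin (n + 2) × Fin (n + 2) => p.1 < p.2 ∧ ¬ G.Adj p.1 p.2),
        (1 - φ (pts x xs p.1 - pts x xs p.2))

/-- `p_n(x) = (1/n!) Σ_{H ∈ 𝒢_n} κ_n(H) J_n(H,x)`. -/
def pFun {d : ℕ} (φ : EuclideanSpace ℝ (Fin d) → ℝ) (n : ℕ)
    (x : EuclideanSpace ℝ (Fin d)) : ℝ :=
  (Nat.factorial n : ℝ)⁻¹ *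
    ∑ H ∈ Finset.univ.filter (fun H : SimpleGraph (Fin (n + 2)) => H.Connected),
      (kappaFun n H : ℝ) * Jfun φ n H x

/-!
Möbius inversion over edge sets turns `∑_H κ(H) ∏_{E(H)} φ` into `∑_G π(G) W(G)`, where
`W(G) = ∏_{E(G)} φ ∏_{E(G)ᶜ} (1 - φ)` is the probability of `G` in the random graph on the
points `0, x₁, …, xₙ, x` with edge probabilities `φ(xᵢ - xⱼ)`. As `|π(G)| ≤ 2ⁿ` and `W ≥ 0`, it
remains to bound the probability that this random graph is connected. A union bound over its
spanning trees, encoded as parent maps `a` (every vertex `v ≠ 0` points to a neighbour `a v`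
closer to `0`), bounds it by `∑_a ∏_{v ≠ 0} φ(x_v - x_{a v})`. Integrating a tree out leaf by
leaf gives a factor `m_φ` per vertex: `m_φⁿ` for fixed `x`, and `m_φⁿ⁺¹` after integrating over
`x` too. Finally there are at most `(n + 2)ⁿ⁺² ≤ 18 · 12ⁿ · n!` parent maps, which absorbs `1/n!`.
-/

section InteriorVerts

variable {d n : ℕ}

lemma mem_interiorVerts {v : Fin (n + 2)} :
    v ∈ interiorVerts n ↔ v ≠ 0 ∧ v ≠ Fin.last (n + 1) := by
  simp [interiorVerts]

lemma mem_interiorVerts_iff_exists {v : Fin (n + 2)} :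
    v ∈ interiorVerts n ↔ ∃ i : Fin n, i.castSucc.succ = v := by
  rw [mem_interiorVerts]
  induction v using Fin.cases with
  | zero => simp
  | succ j =>
    induction j using Fin.lastCases with
    | last => simp [← Fin.succ_last]
    | cast i => simp [Fin.succ_ne_zero, ← Fin.succ_last, Fin.castSucc_lt_last i |>.ne]

def finEquivInteriorVerts (n : ℕ) : Fin n ≃ interiorVerts n :=
  (Equiv.ofInjective _ (Fin.succ_injective _ |>.comp (Fin.castSucc_injective n))).trans
    (Equiv.subtypeEquivRight fun _ => mem_interiorVerts_iff_exists.symm)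

lemma card_interiorVerts (n : ℕ) : #(interiorVerts n) = n := by
  rw [← Fintype.card_coe, ← Fintype.card_congr (finEquivInteriorVerts n), Fintype.card_fin]

lemma zero_notMem_interiorVerts (n : ℕ) : (0 : Fin (n + 2)) ∉ interiorVerts n := by
  simp [mem_interiorVerts]

lemma last_notMem_interiorVerts (n : ℕ) : Fin.last (n + 1) ∉ interiorVerts n := by
  simp [mem_interiorVerts]

lemma insert_last_interiorVerts (n : ℕ) :
    insert (Fin.last (n + 1)) (interiorVerts n) = univ.erase 0 := by
  ext v
  rw [mem_insert, mem_interiorVerts, mem_erase]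
  by_cases hv : v = Fin.last (n + 1)
  · simp [hv]
  · simp [hv]

@[simp]
lemma pts_zero (x : EuclideanSpace ℝ (Fin d)) (xs : Fin n → EuclideanSpace ℝ (Fin d)) :
    pts x xs 0 = 0 :=
  rfl

@[simp]
lemma pts_last (x : EuclideanSpace ℝ (Fin d)) (xs : Fin n → EuclideanSpace ℝ (Fin d)) :
    pts x xs (Fin.last (n + 1)) = x := by
  rw [← Fin.succ_last, pts, Fin.cons_succ, Fin.snoc_last]

@[simp]
lemma pts_castSucc_succ (x : EuclideanSpace ℝ (Fin d))
    (xs : Fin n → EuclideanSpace ℝ (Fin d)) (i : Fin n) :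
    pts x xs i.castSucc.succ = xs i := by
  rw [pts, Fin.cons_succ, Fin.snoc_castSucc]

lemma pts_eq_of_notMem_interiorVerts (x : EuclideanSpace ℝ (Fin d))
    (xs ys : Fin n → EuclideanSpace ℝ (Fin d)) {v : Fin (n + 2)} (hv : v ∉ interiorVerts n) :
    pts x xs v = pts x ys v := by
  rw [mem_interiorVerts, not_and_or, not_not, not_not] at hv
  rcases hv with rfl | rfl <;> simp

lemma pts_zero_eq_update (x : EuclideanSpace ℝ (Fin d)) :
    pts x (0 : Fin n → EuclideanSpace ℝ (Fin d)) =
      Function.update (0 : Fin (n + 2) → EuclideanSpace ℝ (Fin d)) (Fin.last (n + 1)) x := by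
  funext v
  by_cases hv : v = Fin.last (n + 1)
  · simp [hv]
  · rw [Function.update_of_ne hv]
    by_cases hi : v ∈ interiorVerts n
    · obtain ⟨i, rfl⟩ := mem_interiorVerts_iff_exists.1 hi
      simp
    · rw [pts_eq_of_notMem_interiorVerts x 0 0 hi]
      simp_all [mem_interiorVerts]

lemma pts_eq_updateFinset (x : EuclideanSpace ℝ (Fin d)) (xs : Fin n → EuclideanSpace ℝ (Fin d)) :
    pts x xs = Function.updateFinset (pts x 0) (interiorVerts n)
      (Equiv.piCongrLeft (fun _ => EuclideanSpace ℝ (Fin d)) (finEquivInteriorVerts n) xs) := by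
  funext v
  by_cases hv : v ∈ interiorVerts n
  · obtain ⟨i, rfl⟩ := mem_interiorVerts_iff_exists.1 hv
    rw [Function.updateFinset, dif_pos hv, pts_castSucc_succ]
    exact (Equiv.piCongrLeft_apply_apply (P := fun _ => EuclideanSpace ℝ (Fin d))
      (e := finEquivInteriorVerts n) xs i).symm
  · rw [Function.updateFinset, dif_neg hv, pts_eq_of_notMem_interiorVerts x xs 0 hv]

lemma measurable_pts (x : EuclideanSpace ℝ (Fin d)) :
    Measurable (pts (n := n) x) := by
  refine measurable_pi_lambda _ fun v => ?_
  by_cases hv : v ∈ interiorVerts n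
  · obtain ⟨i, rfl⟩ := mem_interiorVerts_iff_exists.1 hv
    simpa using measurable_pi_apply i
  · simp_rw [pts_eq_of_notMem_interiorVerts x _ 0 hv]
    exact measurable_const

end InteriorVerts

section EdgePairs

variable {k : ℕ}

def edgePairs (G : SimpleGraph (Fin k)) : Finset (Fin k × Fin k) :=
  univ.filter fun p => p.1 < p.2 ∧ G.Adj p.1 p.2

def nonEdgePairs (G : SimpleGraph (Fin k)) : Finset (Fin k × Fin k) :=
  univ.filter fun p => p.1 < p.2 ∧ ¬G.Adj p.1 p.2

@[simp]
lemma mem_edgePairs {G : SimpleGraph (Fin k)} {p : Fin k × Fin k} :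
    p ∈ edgePairs G ↔ p.1 < p.2 ∧ G.Adj p.1 p.2 := by
  simp [edgePairs]

@[simp]
lemma mem_nonEdgePairs {G : SimpleGraph (Fin k)} {p : Fin k × Fin k} :
    p ∈ nonEdgePairs G ↔ p.1 < p.2 ∧ ¬G.Adj p.1 p.2 := by
  simp [nonEdgePairs]

lemma edgeCount_eq_card_edgePairs (G : SimpleGraph (Fin k)) : edgeCount G = #(edgePairs G) :=
  rfl

lemma edgeProd_eq_prod_edgePairs {d : ℕ} (φ : EuclideanSpace ℝ (Fin d) → ℝ)
    (G : SimpleGraph (Fin k)) (y : Fin k → EuclideanSpace ℝ (Fin d)) :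
    edgeProd φ G y = ∏ p ∈ edgePairs G, φ (y p.1 - y p.2) :=
  rfl

lemma edgePairs_mono {G H : SimpleGraph (Fin k)} (h : G ≤ H) : edgePairs G ⊆ edgePairs H :=
  fun _ hp => mem_edgePairs.2 ⟨(mem_edgePairs.1 hp).1, h (mem_edgePairs.1 hp).2⟩

lemma nonEdgePairs_eq_sdiff (G : SimpleGraph (Fin k)) :
    nonEdgePairs G = univ.filter (fun p : Fin k × Fin k => p.1 < p.2) \ edgePairs G := by
  ext p
  simp only [mem_nonEdgePairs, mem_sdiff, mem_filter, mem_univ, true_and, mem_edgePairs]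
  tauto

lemma disjoint_edgePairs_nonEdgePairs (G : SimpleGraph (Fin k)) :
    Disjoint (edgePairs G) (nonEdgePairs G) := by
  rw [nonEdgePairs_eq_sdiff]
  exact disjoint_sdiff

lemma fromRel_mem_edgePairs (G : SimpleGraph (Fin k)) :
    SimpleGraph.fromRel (fun i j => (i, j) ∈ edgePairs G) = G := by
  ext i j
  simp only [SimpleGraph.fromRel_adj, mem_edgePairs]
  constructor
  · rintro ⟨-, ⟨-, h⟩ | ⟨-, h⟩⟩
    exacts [h, h.symm]
  · intro h
    rcases h.ne.lt_or_gt with hlt | hgt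
    exacts [⟨h.ne, Or.inl ⟨hlt, h⟩⟩, ⟨h.ne, Or.inr ⟨hgt, h.symm⟩⟩]

lemma edgePairs_fromRel_mem {S : Finset (Fin k × Fin k)} (hS : ∀ p ∈ S, p.1 < p.2) :
    edgePairs (SimpleGraph.fromRel fun i j => (i, j) ∈ S) = S := by
  ext ⟨i, j⟩
  simp only [mem_edgePairs, SimpleGraph.fromRel_adj]
  constructor
  · rintro ⟨hlt, -, h | h⟩
    exacts [h, absurd (hS _ h) (lt_asymm hlt)]
  · intro h
    exact ⟨hS _ h, (hS _ h).ne, Or.inl h⟩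

lemma edgePairs_subset_edgePairs {G H : SimpleGraph (Fin k)} :
    edgePairs G ⊆ edgePairs H ↔ G ≤ H := by
  refine ⟨fun h => ?_, edgePairs_mono⟩
  rw [← fromRel_mem_edgePairs G, ← fromRel_mem_edgePairs H]
  rintro i j ⟨hij, hp | hp⟩
  exacts [⟨hij, Or.inl (h hp)⟩, ⟨hij, Or.inr (h hp)⟩]

lemma sum_supergraphs_eq_sum_powerset {M : Type*} [AddCommMonoid M] (B : SimpleGraph (Fin k))
    (t : Finset (Fin k × Fin k) → M) :
    ∑ H ∈ univ.filter (B ≤ ·), t (edgePairs H) =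
      ∑ S ∈ (nonEdgePairs B).powerset, t (edgePairs B ∪ S) := by
  have hlt : ∀ S ∈ (nonEdgePairs B).powerset, ∀ p ∈ edgePairs B ∪ S, p.1 < p.2 := by
    intro S hS p hp
    rcases mem_union.1 hp with hp | hp
    exacts [(mem_edgePairs.1 hp).1, (mem_nonEdgePairs.1 (mem_powerset.1 hS hp)).1]
  have hdisj : ∀ S ∈ (nonEdgePairs B).powerset, Disjoint (edgePairs B) S := fun S hS =>
    (disjoint_edgePairs_nonEdgePairs B).mono_right (mem_powerset.1 hS)
  refine sum_nbij' (fun H => edgePairs H \ edgePairs B)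
    (fun S => SimpleGraph.fromRel fun i j => (i, j) ∈ edgePairs B ∪ S) ?_ ?_ ?_ ?_ ?_
  · intro H _
    refine mem_powerset.2 fun p hp => ?_
    simp only [mem_sdiff, mem_edgePairs, not_and] at hp
    exact mem_nonEdgePairs.2 ⟨hp.1.1, hp.2 hp.1.1⟩
  · intro S hS
    refine mem_filter.2 ⟨mem_univ _, edgePairs_subset_edgePairs.1 ?_⟩
    rw [edgePairs_fromRel_mem (hlt S hS)]
    exact subset_union_left
  · intro H hH
    rw [union_sdiff_of_subset (edgePairs_mono (mem_filter.1 hH).2), fromRel_mem_edgePairs]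
  · intro S hS
    rw [edgePairs_fromRel_mem (hlt S hS), union_sdiff_cancel_left (hdisj S hS)]
  · intro H hH
    rw [union_sdiff_of_subset (edgePairs_mono (mem_filter.1 hH).2)]

lemma sum_supergraphs_prod_sdiff_mul_prod_nonEdgePairs {R : Type*} [CommSemiring R]
    (B : SimpleGraph (Fin k)) (f g : Fin k × Fin k → R) :
    ∑ H ∈ univ.filter (B ≤ ·),
        (∏ p ∈ edgePairs H \ edgePairs B, f p) * ∏ p ∈ nonEdgePairs H, g p =
      ∏ p ∈ nonEdgePairs B, (f p + g p) := by
  have key := sum_supergraphs_eq_sum_powerset B fun T => (∏ p ∈ T \ edgePairs B, f p) *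
    ∏ p ∈ univ.filter (fun p : Fin k × Fin k => p.1 < p.2) \ T, g p
  simp only [← nonEdgePairs_eq_sdiff] at key
  rw [key, prod_add]
  refine sum_congr rfl fun S hS => ?_
  have hS : S ⊆ nonEdgePairs B := mem_powerset.1 hS
  have hdisj : Disjoint (edgePairs B) S := (disjoint_edgePairs_nonEdgePairs B).mono_right hS
  rw [union_sdiff_cancel_left hdisj, ← sup_eq_union, ← sdiff_sdiff_left, nonEdgePairs_eq_sdiff]

lemma prod_edgePairs_eq_mul_prod_sdiff {M : Type*} [CommMonoid M] {B H : SimpleGraph (Fin k)}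
    (hBH : B ≤ H) (f : Fin k × Fin k → M) :
    ∏ p ∈ edgePairs H, f p = (∏ p ∈ edgePairs B, f p) * ∏ p ∈ edgePairs H \ edgePairs B, f p := by
  rw [mul_comm, prod_sdiff (edgePairs_mono hBH)]

lemma sum_supergraphs_neg_one_pow_mul_prod {R : Type*} [CommRing R] (B : SimpleGraph (Fin k))
    (f : Fin k × Fin k → R) :
    ∑ H ∈ univ.filter (B ≤ ·), (-1) ^ (edgeCount H - edgeCount B) * ∏ p ∈ edgePairs H, f p =
      (∏ p ∈ edgePairs B, f p) * ∏ p ∈ nonEdgePairs B, (1 - f p) := by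
  have h := sum_supergraphs_prod_sdiff_mul_prod_nonEdgePairs B (fun p => -f p) fun _ => 1
  simp only [prod_const_one, mul_one, prod_neg, neg_add_eq_sub] at h
  rw [← h, mul_sum]
  refine sum_congr rfl fun H hH => ?_
  have hBH : B ≤ H := (mem_filter.1 hH).2
  rw [edgeCount_eq_card_edgePairs, edgeCount_eq_card_edgePairs,
    ← card_sdiff_of_subset (edgePairs_mono hBH), prod_edgePairs_eq_mul_prod_sdiff hBH]
  ring

/-- The probability of the graph `G` in the random graph on `Fin k` where the pair `p` is an
edge independently with probability `f p`. -/
def randomGraphWeight {R : Type*} [CommRing R] (f : Fin k × Fin k → R)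
    (G : SimpleGraph (Fin k)) : R :=
  (∏ p ∈ edgePairs G, f p) * ∏ p ∈ nonEdgePairs G, (1 - f p)

lemma randomGraphWeight_nonneg {f : Fin k × Fin k → ℝ} (hf : ∀ p, f p ∈ Set.Icc 0 1)
    (G : SimpleGraph (Fin k)) : 0 ≤ randomGraphWeight f G :=
  mul_nonneg (prod_nonneg fun p _ => (hf p).1) (prod_nonneg fun p _ => sub_nonneg.2 (hf p).2)

lemma sum_supergraphs_randomGraphWeight {R : Type*} [CommRing R] (B : SimpleGraph (Fin k))
    (f : Fin k × Fin k → R) :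
    ∑ H ∈ univ.filter (B ≤ ·), randomGraphWeight f H = ∏ p ∈ edgePairs B, f p := by
  have h := sum_supergraphs_prod_sdiff_mul_prod_nonEdgePairs B f fun p => 1 - f p
  simp only [add_sub_cancel, prod_const_one] at h
  rw [← mul_one (∏ p ∈ edgePairs B, f p), ← h, mul_sum]
  refine sum_congr rfl fun H hH => ?_
  rw [randomGraphWeight, prod_edgePairs_eq_mul_prod_sdiff (mem_filter.1 hH).2, mul_assoc]

end EdgePairs

section Kappa

lemma sum_kappaFun_mul_prod_edgePairs (n : ℕ) (f : Fin (n + 2) × Fin (n + 2) → ℝ) :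
    ∑ H ∈ univ.filter (fun H : SimpleGraph (Fin (n + 2)) => H.Connected),
        (kappaFun n H : ℝ) * ∏ p ∈ edgePairs H, f p =
      ∑ G ∈ univ.filter (fun G : SimpleGraph (Fin (n + 2)) => G.Connected),
        (piFun n G : ℝ) * randomGraphWeight f G := by
  calc _ = ∑ H ∈ univ.filter (fun H : SimpleGraph (Fin (n + 2)) => H.Connected),
          ∑ G ∈ univ.filter (fun G : SimpleGraph (Fin (n + 2)) => G.Connected ∧ G ≤ H),
            (piFun n G : ℝ) * ((-1) ^ (edgeCount H - edgeCount G) * ∏ p ∈ edgePairs H, f p) := by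
        refine sum_congr rfl fun H _ => ?_
        rw [kappaFun, Int.cast_sum, sum_mul]
        refine sum_congr rfl fun G _ => ?_
        push_cast
        ring
    _ = ∑ G ∈ univ.filter (fun G : SimpleGraph (Fin (n + 2)) => G.Connected),
          ∑ H ∈ univ.filter (G ≤ ·),
            (piFun n G : ℝ) * ((-1) ^ (edgeCount H - edgeCount G) * ∏ p ∈ edgePairs H, f p) := by
        refine sum_comm' fun H G => ?_
        simp only [mem_filter, mem_univ, true_and]
        exact ⟨fun h => ⟨h.2.2, h.2.1⟩, fun h => ⟨h.2.mono h.1, h.2, h.1⟩⟩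
    _ = _ := by
        refine sum_congr rfl fun G _ => ?_
        rw [← mul_sum, sum_supergraphs_neg_one_pow_mul_prod, randomGraphWeight]

lemma abs_piFun_le (n : ℕ) (G : SimpleGraph (Fin (n + 2))) : |piFun n G| ≤ 2 ^ n := by
  calc |piFun n G|
      ≤ ∑ I ∈ (interiorVerts n).powerset, |(-1 : ℤ) ^ (n - #I) *
          if ConnIn G 0 (Fin.last (n + 1)) ↑I then 1 else 0| := abs_sum_le_sum_abs _ _
    _ ≤ ∑ _I ∈ (interiorVerts n).powerset, 1 := by
        refine sum_le_sum fun I _ => ?_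
        rw [abs_mul, abs_pow, abs_neg, abs_one, one_pow, one_mul]
        split <;> simp
    _ = 2 ^ n := by simp [card_interiorVerts]

end Kappa

section ParentMap

variable {V : Type*}

/-- A parent map encodes the spanning tree with edges `{v, a v}`, `v ≠ r`, rooted at `r`; the
height function `h` rules out cycles. -/
def IsParentMap (r : V) (a : V → V) : Prop :=
  a r = r ∧ ∃ h : V → ℕ, ∀ v, v ≠ r → h (a v) < h v

def parentMaps [Fintype V] [DecidableEq V] (r : V) : Finset (V → V) :=
  univ.filter (IsParentMap r)

def parentGraph (a : V → V) : SimpleGraph V :=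
  SimpleGraph.fromRel fun v w => a v = w

namespace IsParentMap

variable {r : V} {a : V → V}

lemma apply_ne_self (ha : IsParentMap r a) {v : V} (hv : v ≠ r) : a v ≠ v := by
  obtain ⟨h, hh⟩ := ha.2
  exact fun hc => (hh v hv).ne (congrArg h hc)

lemma eq_of_apply_eq_of_apply_eq (ha : IsParentMap r a) {u v : V} (huv : a u = v)
    (hvu : a v = u) : u = v := by
  obtain ⟨h, hh⟩ := ha.2
  by_contra hne
  have hu : u ≠ r := by rintro rfl; exact hne (ha.1 ▸ huv)
  have hv : v ≠ r := by rintro rfl; exact hne (ha.1 ▸ hvu).symm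
  have h1 := hh u hu
  have h2 := hh v hv
  rw [huv] at h1
  rw [hvu] at h2
  omega

lemma exists_leaf (ha : IsParentMap r a) {s : Finset V} (hs : s.Nonempty) (hr : r ∉ s) :
    ∃ v ∈ s, ∀ w ∈ s, a w ≠ v := by
  obtain ⟨h, hh⟩ := ha.2
  obtain ⟨v, hv, hmax⟩ := s.exists_max_image h hs
  refine ⟨v, hv, fun w hw hwv => ?_⟩
  have := hh w (ne_of_mem_of_not_mem hw hr)
  rw [hwv] at this
  exact (hmax w hw).not_gt this

lemma ne_root_of_apply_eq (ha : IsParentMap r a) {u v : V} (huv : u ≠ v) (h : a u = v) :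
    u ≠ r := by
  rintro rfl
  exact huv (ha.1 ▸ h)

lemma parentGraph_le (ha : IsParentMap r a) {G : SimpleGraph V}
    (hG : ∀ v, v ≠ r → G.Adj v (a v)) : parentGraph a ≤ G := by
  rintro u v ⟨huv, h | h⟩
  · exact h ▸ hG u (ha.ne_root_of_apply_eq huv h)
  · exact (h ▸ hG v (ha.ne_root_of_apply_eq (Ne.symm huv) h)).symm

end IsParentMap

/-- Walking one step along a shortest path to `r` defines a parent map inside `G`. -/
lemma SimpleGraph.Connected.exists_isParentMap {G : SimpleGraph V} (hG : G.Connected) (r : V) :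
    ∃ a, IsParentMap r a ∧ ∀ v, v ≠ r → G.Adj v (a v) := by
  have step : ∀ v, v ≠ r → ∃ u, G.Adj v u ∧ G.dist u r < G.dist v r := by
    intro v hv
    obtain ⟨p, hp⟩ := hG.exists_walk_length_eq_dist v r
    obtain ⟨u, hadj, q, rfl⟩ := SimpleGraph.Walk.exists_eq_cons_of_ne hv p
    refine ⟨u, hadj, (SimpleGraph.dist_le q).trans_lt ?_⟩
    rw [← hp, SimpleGraph.Walk.length_cons]
    exact Nat.lt_succ_self _
  choose! b hb using step
  refine ⟨Function.update b r r, ⟨Function.update_self .., fun v => G.dist v r, fun v hv => ?_⟩,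
    fun v hv => ?_⟩
  · rw [Function.update_of_ne hv]
    exact (hb v hv).2
  · rw [Function.update_of_ne hv]
    exact (hb v hv).1

/-- Each edge of the parent graph is `{v, a v}` for exactly one `v ≠ r`. -/
lemma IsParentMap.prod_edgePairs_parentGraph {k : ℕ} {M : Type*} [CommMonoid M] {r : Fin k}
    {a : Fin k → Fin k} (ha : IsParentMap r a) (F : Fin k × Fin k → M)
    (hF : ∀ u v, F (u, v) = F (v, u)) :
    ∏ p ∈ edgePairs (parentGraph a), F p = ∏ v ∈ univ.erase r, F (v, a v) := by
  symm
  refine prod_bij (fun v _ => (v ⊓ a v, v ⊔ a v)) ?_ ?_ ?_ ?_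
  · intro v hv
    rw [mem_edgePairs]
    rcases (ha.apply_ne_self (ne_of_mem_erase hv)).lt_or_gt with h | h
    · simp only [inf_of_le_right h.le, sup_of_le_left h.le]
      exact ⟨h, h.ne, Or.inr rfl⟩
    · simp only [inf_of_le_left h.le, sup_of_le_right h.le]
      exact ⟨h, h.ne, Or.inl rfl⟩
  · intro u _ v _ huv
    rw [Prod.ext_iff, ← Sym2.inf_mk, ← Sym2.sup_mk, ← Sym2.inf_mk, ← Sym2.sup_mk,
      Sym2.inf_eq_inf_and_sup_eq_sup, Sym2.eq_iff] at huv
    rcases huv with ⟨h, -⟩ | ⟨h1, h2⟩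
    exacts [h, ha.eq_of_apply_eq_of_apply_eq h2 h1.symm]
  · rintro ⟨u, v⟩ hp
    obtain ⟨hlt, hne, h | h⟩ := mem_edgePairs.1 hp
    · exact ⟨u, mem_erase.2 ⟨ha.ne_root_of_apply_eq hne h, mem_univ _⟩,
        by simp [h, hlt.le]⟩
    · exact ⟨v, mem_erase.2 ⟨ha.ne_root_of_apply_eq (Ne.symm hne) h, mem_univ _⟩,
        by simp [h, hlt.le]⟩
  · intro v _
    rcases le_total v (a v) with h | h
    · simp [h]
    · simp [h, hF v]

end ParentMap

section TreeBound

variable {k : ℕ}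

lemma IsParentMap.prod_edgePairs_le {M : Type*} [CommMonoid M] [Preorder M] [MulLeftMono M]
    {r : Fin k} {a : Fin k → Fin k} (ha : IsParentMap r a) {H : SimpleGraph (Fin k)}
    (hH : ∀ v, v ≠ r → H.Adj v (a v)) (F : Fin k × Fin k → M) (hF1 : ∀ p, F p ≤ 1)
    (hF : ∀ u v, F (u, v) = F (v, u)) :
    ∏ p ∈ edgePairs H, F p ≤ ∏ v ∈ univ.erase r, F (v, a v) := by
  rw [← ha.prod_edgePairs_parentGraph F hF]
  exact prod_le_prod_of_subset_of_le_one' (edgePairs_mono (ha.parentGraph_le hH))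
    fun p _ _ => hF1 p

/-- A connected graph contains the tree of one of its parent maps: a union bound over parent
maps. -/
lemma sum_connected_randomGraphWeight_le {f : Fin k × Fin k → ℝ} (hf : ∀ p, f p ∈ Set.Icc 0 1)
    (hF : ∀ u v, f (u, v) = f (v, u)) (r : Fin k) :
    ∑ G ∈ univ.filter (fun G : SimpleGraph (Fin k) => G.Connected), randomGraphWeight f G ≤
      ∑ a ∈ parentMaps r, ∏ v ∈ univ.erase r, f (v, a v) := by
  have hW := randomGraphWeight_nonneg hf
  calc _ ≤ ∑ G ∈ univ.filter (fun G : SimpleGraph (Fin k) => G.Connected),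
          ∑ a ∈ (parentMaps r).filter (parentGraph · ≤ G), randomGraphWeight f G := by
        refine sum_le_sum fun G hG => ?_
        obtain ⟨a, ha, hadj⟩ := (mem_filter.1 hG).2.exists_isParentMap r
        exact single_le_sum (f := fun _ => randomGraphWeight f G) (fun _ _ => hW G)
          (mem_filter.2 ⟨mem_filter.2 ⟨mem_univ _, ha⟩, ha.parentGraph_le hadj⟩)
    _ ≤ ∑ G, ∑ a ∈ (parentMaps r).filter (parentGraph · ≤ G), randomGraphWeight f G :=
        sum_le_sum_of_subset_of_nonneg (filter_subset _ _) fun G _ _ =>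
          sum_nonneg fun _ _ => hW G
    _ = ∑ a ∈ parentMaps r, ∑ G ∈ univ.filter (parentGraph a ≤ ·), randomGraphWeight f G :=
        sum_comm' fun G a => by simp only [mem_filter, mem_univ, true_and]; tauto
    _ = _ := sum_congr rfl fun a ha => by
        rw [sum_supergraphs_randomGraphWeight,
          (mem_filter.1 ha).2.prod_edgePairs_parentGraph _ fun u v => hF u v]

end TreeBound

lemma abs_sum_kappaFun_mul_prod_le (n : ℕ) {f : Fin (n + 2) × Fin (n + 2) → ℝ}
    (hf : ∀ p, f p ∈ Set.Icc 0 1) (hF : ∀ u v, f (u, v) = f (v, u)) :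
    |∑ H ∈ univ.filter (fun H : SimpleGraph (Fin (n + 2)) => H.Connected),
        (kappaFun n H : ℝ) * ∏ p ∈ edgePairs H, f p| ≤
      2 ^ n * ∑ a ∈ parentMaps 0, ∏ v ∈ univ.erase 0, f (v, a v) := by
  have hW := randomGraphWeight_nonneg hf
  rw [sum_kappaFun_mul_prod_edgePairs]
  calc _ ≤ ∑ G ∈ univ.filter (fun G : SimpleGraph (Fin (n + 2)) => G.Connected),
          2 ^ n * randomGraphWeight f G := by
        refine (abs_sum_le_sum_abs _ _).trans (sum_le_sum fun G _ => ?_)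
        rw [abs_mul, abs_of_nonneg (hW G)]
        exact mul_le_mul_of_nonneg_right (by exact_mod_cast abs_piFun_le n G) (hW G)
    _ ≤ _ := by
        rw [← mul_sum]
        exact mul_le_mul_of_nonneg_left (sum_connected_randomGraphWeight_le hf hF 0)
          (by positivity)

section TreeIntegral

lemma lmarginal_const_mul {δ : Type*} {X : δ → Type*} [DecidableEq δ]
    [∀ i, MeasurableSpace (X i)] (μ : ∀ i, Measure (X i)) (s : Finset δ) (c : ℝ≥0∞)
    {f : (∀ i, X i) → ℝ≥0∞} (hf : Measurable f) (x : ∀ i, X i) :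
    (∫⋯∫⁻_s, (fun y => c * f y) ∂μ) x = c * (∫⋯∫⁻_s, f ∂μ) x :=
  lintegral_const_mul c (hf.comp measurable_updateFinset)

variable {δ E : Type*} [MeasurableSpace E] [AddGroup E] [MeasurableSub₂ E] {ψ : E → ℝ≥0∞}

lemma measurable_prod_comp_sub (hψ : Measurable ψ) (a : δ → δ) (s : Finset δ) :
    Measurable fun y : δ → E => ∏ v ∈ s, ψ (y v - y (a v)) :=
  Finset.measurable_prod _ fun v _ =>
    hψ.comp ((measurable_pi_apply v).sub (measurable_pi_apply (a v)))

/-- Integrating out the vertices of `s` one leaf at a time, each leaf contributes a translate of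
`ψ`, hence a factor `∫ ψ`. -/
theorem IsParentMap.lmarginal_prod_comp_sub [DecidableEq δ] [MeasurableAdd E] (μ : Measure E)
    [SigmaFinite μ] [μ.IsAddRightInvariant] (hψ : Measurable ψ) {r : δ} {a : δ → δ}
    (ha : IsParentMap r a) {s : Finset δ} (hr : r ∉ s) (y : δ → E) :
    (∫⋯∫⁻_s, (fun y => ∏ v ∈ s, ψ (y v - y (a v))) ∂fun _ => μ) y = (∫⁻ z, ψ z ∂μ) ^ #s := by
  induction s using Finset.strongInduction generalizing y with
  | H s ih =>
  rcases s.eq_empty_or_nonempty with rfl | hs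
  · simp
  obtain ⟨v, hv, hleaf⟩ := ha.exists_leaf hs hr
  have hav : a v ≠ v := ha.apply_ne_self (ne_of_mem_of_not_mem hv hr)
  have inner : ∀ x : δ → E,
      ∫⁻ t, ∏ w ∈ s, ψ (Function.update x v t w - Function.update x v t (a w)) ∂μ =
        (∫⁻ z, ψ z ∂μ) * ∏ w ∈ s.erase v, ψ (x w - x (a w)) := by
    intro x
    have hrest : ∀ t, ∏ w ∈ s.erase v, ψ (Function.update x v t w - Function.update x v t (a w)) =
        ∏ w ∈ s.erase v, ψ (x w - x (a w)) := fun t =>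
      prod_congr rfl fun w hw => by
        rw [Function.update_of_ne (ne_of_mem_erase hw),
          Function.update_of_ne (hleaf w (mem_of_mem_erase hw))]
    simp_rw [← mul_prod_erase s _ hv, hrest, Function.update_self, Function.update_of_ne hav]
    rw [lintegral_mul_const (f := fun t => ψ (t - x (a v))) _ (hψ.comp (measurable_sub_const _)),
      lintegral_sub_right_eq_self]
  rw [lmarginal_erase' _ (measurable_prod_comp_sub hψ a s) hv]
  simp_rw [inner]
  rw [lmarginal_const_mul _ _ _ (measurable_prod_comp_sub hψ a _),
    ih _ (erase_ssubset hv) (fun h => hr (mem_of_mem_erase h)), ← pow_succ',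
    card_erase_add_one hv]

end TreeIntegral

section PtsIntegral

variable {d n : ℕ} {F : (Fin (n + 2) → EuclideanSpace ℝ (Fin d)) → ℝ≥0∞}

lemma lintegral_comp_pts (hF : Measurable F) (x : EuclideanSpace ℝ (Fin d)) :
    ∫⁻ xs, F (pts x xs) = (∫⋯∫⁻_(interiorVerts n), F) (pts x 0) := by
  have hF' : Measurable fun y => F (Function.updateFinset (pts x 0) (interiorVerts n) y) :=
    hF.comp measurable_updateFinset
  rw [lmarginal, ← (measurePreserving_piCongrLeft (fun _ => volume)
    (finEquivInteriorVerts n)).lintegral_comp hF', volume_pi]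
  simp_rw [MeasurableEquiv.coe_piCongrLeft, ← pts_eq_updateFinset]

lemma lintegral_lintegral_comp_pts (hF : Measurable F) :
    ∫⁻ x, ∫⁻ xs, F (pts x xs) = (∫⋯∫⁻_(univ.erase 0), F) 0 := by
  rw [← insert_last_interiorVerts, lmarginal_insert _ hF (last_notMem_interiorVerts n)]
  simp_rw [lintegral_comp_pts hF, pts_zero_eq_update]

end PtsIntegral

lemma card_parentMaps_le (k : ℕ) (r : Fin k) : #(parentMaps r) ≤ k ^ k := by
  simpa using card_le_univ (parentMaps r)

lemma add_two_pow_le_mul_factorial (n : ℕ) :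
    ((n : ℝ) + 2) ^ (n + 2) ≤ 18 * 12 ^ n * n.factorial := by
  have hexp : Real.exp ((n : ℝ) + 2) ≤ 3 ^ (n + 2) := by
    rw [show (n : ℝ) + 2 = (n + 2 : ℕ) by push_cast; ring, ← Real.exp_one_pow]
    exact pow_le_pow_left₀ (Real.exp_pos 1).le (Real.exp_one_lt_d9.le.trans (by norm_num)) _
  have hstir := Real.pow_div_factorial_le_exp ((n : ℝ) + 2) (by positivity) (n + 2)
  rw [div_le_iff₀ (by positivity), Nat.factorial_succ, Nat.factorial_succ] at hstir
  push_cast at hstir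
  have hquad : (n + 2) * (n + 1) ≤ 2 * 4 ^ n := by
    have h1 : n + 1 ≤ 2 ^ n := Nat.lt_two_pow_self
    have h2 : n + 2 ≤ 2 ^ (n + 1) := by rw [pow_succ]; omega
    calc (n + 2) * (n + 1) ≤ 2 ^ (n + 1) * 2 ^ n := Nat.mul_le_mul h2 h1
      _ = 2 * 4 ^ n := by rw [pow_succ, show 4 = 2 * 2 from rfl, mul_pow]; ring
  have hquad' : ((n : ℝ) + 2) * (n + 1) ≤ 2 * 4 ^ n := by exact_mod_cast hquad
  calc _ ≤ 3 ^ (n + 2) * (((n : ℝ) + 1 + 1) * (((n : ℝ) + 1) * n.factorial)) :=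
        hstir.trans (by gcongr)
    _ = 9 * 3 ^ n * (((n : ℝ) + 2) * (n + 1)) * n.factorial := by ring
    _ ≤ 9 * 3 ^ n * (2 * 4 ^ n) * n.factorial := by gcongr
    _ = 18 * 12 ^ n * n.factorial := by
        rw [show (12 : ℝ) = 3 * 4 by norm_num, mul_pow]
        ring

lemma ofReal_mul_sum_parentMaps_le (n j : ℕ) {m : ℝ} (hm : 0 ≤ m) :
    ENNReal.ofReal (2 ^ n / n.factorial) *
        ∑ _a ∈ parentMaps (0 : Fin (n + 2)), ENNReal.ofReal m ^ j ≤
      ENNReal.ofReal (18 * 24 ^ n * m ^ j) := by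
  rw [sum_const, nsmul_eq_mul, ← ENNReal.ofReal_pow hm, ← ENNReal.ofReal_natCast,
    ← ENNReal.ofReal_mul (by positivity), ← ENNReal.ofReal_mul (by positivity)]
  refine ENNReal.ofReal_le_ofReal ?_
  have hA : (#(parentMaps (0 : Fin (n + 2))) : ℝ) ≤ ((n : ℝ) + 2) ^ (n + 2) := by
    exact_mod_cast card_parentMaps_le (n + 2) 0
  have hfac : (0 : ℝ) < n.factorial := by exact_mod_cast n.factorial_pos
  calc _ ≤ 2 ^ n / n.factorial * ((n + 2) ^ (n + 2) * m ^ j) := by gcongr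
    _ ≤ 2 ^ n / n.factorial * (18 * 12 ^ n * n.factorial * m ^ j) := by
        gcongr
        exact add_two_pow_le_mul_factorial n
    _ = 18 * 24 ^ n * m ^ j := by
        rw [show (24 : ℝ) = 2 * 12 by norm_num, mul_pow]
        field_simp

section Bounds

variable {d n : ℕ} {φ : EuclideanSpace ℝ (Fin d) → ℝ}

lemma measurable_lintegral_comp_pts {F : (Fin (n + 2) → EuclideanSpace ℝ (Fin d)) → ℝ≥0∞}
    (hF : Measurable F) : Measurable fun x => ∫⁻ xs, F (pts x xs) := by
  simp_rw [lintegral_comp_pts hF, pts_zero_eq_update]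
  exact (hF.lmarginal _).comp (measurable_update _)

lemma lintegral_ofReal_eq_ofReal_integral (hφ : ∀ x, φ x ∈ Set.Icc (0 : ℝ) 1)
    (hφint : Integrable φ) : ∫⁻ z, ENNReal.ofReal (φ z) = ENNReal.ofReal (∫ z, φ z) :=
  (ofReal_integral_eq_lintegral_ofReal hφint (ae_of_all _ fun z => (hφ z).1)).symm

lemma lintegral_prod_parentMap_pts_le (hφm : Measurable φ) (hφ : ∀ x, φ x ∈ Set.Icc (0 : ℝ) 1)
    (hφint : Integrable φ) {a : Fin (n + 2) → Fin (n + 2)} (ha : IsParentMap 0 a)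
    (x : EuclideanSpace ℝ (Fin d)) :
    ∫⁻ xs, ∏ v ∈ univ.erase 0, ENNReal.ofReal (φ (pts x xs v - pts x xs (a v))) ≤
      ENNReal.ofReal (∫ z, φ z) ^ n := by
  have hψ : Measurable fun z => ENNReal.ofReal (φ z) := ENNReal.measurable_ofReal.comp hφm
  calc _ ≤ ∫⁻ xs, ∏ v ∈ interiorVerts n, ENNReal.ofReal (φ (pts x xs v - pts x xs (a v))) :=
        lintegral_mono fun xs => prod_le_prod_of_subset_of_le_one'
          (insert_last_interiorVerts n ▸ subset_insert _ _)
          fun v _ _ => ENNReal.ofReal_le_one.2 (hφ _).2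
    _ = ENNReal.ofReal (∫ z, φ z) ^ n := by
        rw [lintegral_comp_pts (measurable_prod_comp_sub hψ a _),
          ha.lmarginal_prod_comp_sub volume hψ (zero_notMem_interiorVerts n), card_interiorVerts,
          lintegral_ofReal_eq_ofReal_integral hφ hφint]

lemma lintegral_lintegral_prod_parentMap_pts (hφm : Measurable φ)
    (hφ : ∀ x, φ x ∈ Set.Icc (0 : ℝ) 1) (hφint : Integrable φ)
    {a : Fin (n + 2) → Fin (n + 2)} (ha : IsParentMap 0 a) :
    ∫⁻ x, ∫⁻ xs, ∏ v ∈ univ.erase 0, ENNReal.ofReal (φ (pts x xs v - pts x xs (a v))) =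
      ENNReal.ofReal (∫ z, φ z) ^ (n + 1) := by
  have hψ : Measurable fun z => ENNReal.ofReal (φ z) := ENNReal.measurable_ofReal.comp hφm
  rw [lintegral_lintegral_comp_pts (measurable_prod_comp_sub hψ a _),
    ha.lmarginal_prod_comp_sub volume hψ (notMem_erase 0 univ), card_erase_of_mem (mem_univ _),
    card_univ, Fintype.card_fin, lintegral_ofReal_eq_ofReal_integral hφ hφint]
  rfl

lemma ofReal_prod_edgePairs_le_prod_parentMap (hφ : ∀ x, φ x ∈ Set.Icc (0 : ℝ) 1)
    (hφsymm : ∀ x, φ (-x) = φ x) {a : Fin (n + 2) → Fin (n + 2)} (ha : IsParentMap 0 a)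
    {H : SimpleGraph (Fin (n + 2))} (hH : ∀ v, v ≠ 0 → H.Adj v (a v))
    (y : Fin (n + 2) → EuclideanSpace ℝ (Fin d)) :
    ENNReal.ofReal (edgeProd φ H y) ≤ ∏ v ∈ univ.erase 0, ENNReal.ofReal (φ (y v - y (a v))) := by
  rw [edgeProd_eq_prod_edgePairs, ENNReal.ofReal_prod_of_nonneg fun p _ => (hφ _).1]
  exact ha.prod_edgePairs_le hH _ (fun p => ENNReal.ofReal_le_one.2 (hφ _).2)
    fun u v => by rw [← neg_sub, hφsymm]

lemma integrable_edgeProd_pts (hφm : Measurable φ) (hφ : ∀ x, φ x ∈ Set.Icc (0 : ℝ) 1)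
    (hφsymm : ∀ x, φ (-x) = φ x) (hφint : Integrable φ) {H : SimpleGraph (Fin (n + 2))}
    (hH : H.Connected) (x : EuclideanSpace ℝ (Fin d)) :
    Integrable fun xs => edgeProd φ H (pts x xs) := by
  obtain ⟨a, ha, hadj⟩ := hH.exists_isParentMap 0
  have hmeas : Measurable fun xs => edgeProd φ H (pts x xs) :=
    Finset.measurable_prod _ fun p _ =>
      hφm.comp ((measurable_pts x).eval.sub (measurable_pts x).eval)
  refine ⟨hmeas.aestronglyMeasurable, ?_⟩
  rw [hasFiniteIntegral_iff_ofReal (ae_of_all _ fun xs =>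
    show 0 ≤ edgeProd φ H (pts x xs) from prod_nonneg fun p _ => (hφ _).1)]
  calc _ ≤ _ := lintegral_mono fun xs =>
        ofReal_prod_edgePairs_le_prod_parentMap hφ hφsymm ha hadj (pts x xs)
    _ ≤ _ := lintegral_prod_parentMap_pts_le hφm hφ hφint ha x
    _ < ⊤ := ENNReal.pow_lt_top ENNReal.ofReal_lt_top

lemma pFun_eq_integral (hφm : Measurable φ) (hφ : ∀ x, φ x ∈ Set.Icc (0 : ℝ) 1)
    (hφsymm : ∀ x, φ (-x) = φ x) (hφint : Integrable φ) (x : EuclideanSpace ℝ (Fin d)) :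
    pFun φ n x = (n.factorial : ℝ)⁻¹ * ∫ xs, ∑ H ∈ univ.filter
      (fun H : SimpleGraph (Fin (n + 2)) => H.Connected),
        (kappaFun n H : ℝ) * edgeProd φ H (pts x xs) := by
  rw [pFun, integral_finsetSum _ fun H hH =>
    (integrable_edgeProd_pts hφm hφ hφsymm hφint (mem_filter.1 hH).2 x).const_mul _]
  simp only [Jfun, integral_const_mul]

lemma enorm_sum_kappaFun_mul_edgeProd_le (hφ : ∀ x, φ x ∈ Set.Icc (0 : ℝ) 1)
    (hφsymm : ∀ x, φ (-x) = φ x) (y : Fin (n + 2) → EuclideanSpace ℝ (Fin d)) :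
    ‖∑ H ∈ univ.filter (fun H : SimpleGraph (Fin (n + 2)) => H.Connected),
        (kappaFun n H : ℝ) * edgeProd φ H y‖ₑ ≤
      ENNReal.ofReal (2 ^ n) *
        ∑ a ∈ parentMaps 0, ∏ v ∈ univ.erase 0, ENNReal.ofReal (φ (y v - y (a v))) := by
  rw [Real.enorm_eq_ofReal_abs]
  refine (ENNReal.ofReal_le_ofReal (abs_sum_kappaFun_mul_prod_le n (fun p => hφ _)
    fun u v => by rw [← neg_sub, hφsymm])).trans_eq ?_
  rw [ENNReal.ofReal_mul (by positivity),
    ENNReal.ofReal_sum_of_nonneg fun a _ => prod_nonneg fun v _ => (hφ _).1]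
  simp only [ENNReal.ofReal_prod_of_nonneg fun v _ => (hφ _).1]

lemma enorm_pFun_le_sum_lintegral (hφm : Measurable φ) (hφ : ∀ x, φ x ∈ Set.Icc (0 : ℝ) 1)
    (hφsymm : ∀ x, φ (-x) = φ x) (hφint : Integrable φ) (x : EuclideanSpace ℝ (Fin d)) :
    ‖pFun φ n x‖ₑ ≤ ENNReal.ofReal (2 ^ n / n.factorial) * ∑ a ∈ parentMaps (0 : Fin (n + 2)),
      ∫⁻ xs, ∏ v ∈ univ.erase 0, ENNReal.ofReal (φ (pts x xs v - pts x xs (a v))) := by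
  have hmeas : ∀ a : Fin (n + 2) → Fin (n + 2), Measurable fun xs =>
      ∏ v ∈ univ.erase 0, ENNReal.ofReal (φ (pts x xs v - pts x xs (a v))) := fun a =>
    (measurable_prod_comp_sub (ENNReal.measurable_ofReal.comp hφm) a _).comp (measurable_pts x)
  rw [pFun_eq_integral hφm hφ hφsymm hφint, enorm_mul, Real.enorm_of_nonneg (by positivity),
    div_eq_mul_inv, ENNReal.ofReal_mul (by positivity), mul_comm (ENNReal.ofReal (2 ^ n)),
    mul_assoc]
  gcongr
  calc _ ≤ _ := enorm_integral_le_lintegral_enorm _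
    _ ≤ _ := lintegral_mono fun xs => enorm_sum_kappaFun_mul_edgeProd_le hφ hφsymm (pts x xs)
    _ = _ := by
        rw [lintegral_const_mul' _ _ ENNReal.ofReal_ne_top,
          lintegral_finsetSum _ fun a _ => hmeas a]

lemma enorm_pFun_le (hφm : Measurable φ) (hφ : ∀ x, φ x ∈ Set.Icc (0 : ℝ) 1)
    (hφsymm : ∀ x, φ (-x) = φ x) (hφint : Integrable φ) (x : EuclideanSpace ℝ (Fin d)) :
    ‖pFun φ n x‖ₑ ≤ ENNReal.ofReal (18 * 24 ^ n * (∫ z, φ z) ^ n) := by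
  refine (enorm_pFun_le_sum_lintegral hφm hφ hφsymm hφint x).trans (le_trans ?_
    (ofReal_mul_sum_parentMaps_le n n (integral_nonneg fun z => (hφ z).1)))
  gcongr with a ha
  exact lintegral_prod_parentMap_pts_le hφm hφ hφint (mem_filter.1 ha).2 x

lemma lintegral_enorm_pFun_le (hφm : Measurable φ) (hφ : ∀ x, φ x ∈ Set.Icc (0 : ℝ) 1)
    (hφsymm : ∀ x, φ (-x) = φ x) (hφint : Integrable φ) :
    ∫⁻ x, ‖pFun φ n x‖ₑ ≤ ENNReal.ofReal (18 * 24 ^ n * (∫ z, φ z) ^ (n + 1)) := by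
  have hmeas : ∀ a : Fin (n + 2) → Fin (n + 2),
      Measurable fun y : Fin (n + 2) → EuclideanSpace ℝ (Fin d) =>
        ∏ v ∈ univ.erase 0, ENNReal.ofReal (φ (y v - y (a v))) := fun a =>
    measurable_prod_comp_sub (ENNReal.measurable_ofReal.comp hφm) a _
  calc _ ≤ _ := lintegral_mono fun x => enorm_pFun_le_sum_lintegral hφm hφ hφsymm hφint x
    _ = ENNReal.ofReal (2 ^ n / n.factorial) *
          ∑ _a ∈ parentMaps (0 : Fin (n + 2)), ENNReal.ofReal (∫ z, φ z) ^ (n + 1) := by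
        rw [lintegral_const_mul' _ _ ENNReal.ofReal_ne_top,
          lintegral_finsetSum _ fun a _ => measurable_lintegral_comp_pts (hmeas a)]
        exact congrArg _ (sum_congr rfl fun a ha =>
          lintegral_lintegral_prod_parentMap_pts hφm hφ hφint (mem_filter.1 ha).2)
    _ ≤ _ := ofReal_mul_sum_parentMaps_le n (n + 1) (integral_nonneg fun z => (hφ z).1)

end Bounds

/-- The coefficients `p_n` of the expansion of the pair-connectedness function of the
random connection model at `t = 0` satisfy `‖p_n‖∞ ≤ c₁ c₂ⁿ` and `‖p_n‖₁ ≤ c₁ c₂ⁿ`,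
with constants `c₁, c₂ > 0` depending only on `d` and `m_φ = ∫ φ`. -/
theorem pFun_norm_bounds :
    ∃ c₁ c₂ : ℕ → ℝ → ℝ,
      ∀ (d : ℕ), 1 ≤ d →
        ∀ φ : EuclideanSpace ℝ (Fin d) → ℝ,
          Measurable φ → (∀ x, φ x ∈ Set.Icc (0 : ℝ) 1) → (∀ x, φ (-x) = φ x) →
          Integrable φ → 0 < ∫ x, φ x →
          0 < c₁ d (∫ x, φ x) ∧ 0 < c₂ d (∫ x, φ x) ∧
          ∀ n : ℕ,
            eLpNorm (pFun φ n) ⊤ volume ≤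
              ENNReal.ofReal (c₁ d (∫ x, φ x) * c₂ d (∫ x, φ x) ^ n) ∧
            eLpNorm (pFun φ n) 1 volume ≤
              ENNReal.ofReal (c₁ d (∫ x, φ x) * c₂ d (∫ x, φ x) ^ n) := by
  refine ⟨fun _ m => 18 * max m 1, fun _ m => 24 * max m 1,
    fun d _ φ hφm hφ hφsymm hφint _ => ⟨by positivity, by positivity, fun n => ?_⟩⟩
  have hm : 0 ≤ ∫ x, φ x := integral_nonneg fun x => (hφ x).1
  have hpow : ∀ j ≤ n + 1, 18 * 24 ^ n * (∫ x, φ x) ^ j ≤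
      18 * max (∫ x, φ x) 1 * (24 * max (∫ x, φ x) 1) ^ n := fun j hj =>
    calc _ ≤ 18 * 24 ^ n * max (∫ x, φ x) 1 ^ (n + 1) := by
          gcongr
          exact (pow_le_pow_left₀ hm (le_max_left _ _) j).trans
            (pow_le_pow_right₀ (le_max_right _ _) hj)
      _ = _ := by ring
  constructor
  · rw [eLpNorm_exponent_top]
    exact eLpNormEssSup_le_of_ae_enorm_bound (ae_of_all _ fun x =>
      (enorm_pFun_le hφm hφ hφsymm hφint x).trans (ENNReal.ofReal_le_ofReal (hpow n n.le_succ)))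
  · rw [eLpNorm_one_eq_lintegral_enorm]
    exact (lintegral_enorm_pFun_le hφm hφ hφsymm hφint).trans
      (ENNReal.ofReal_le_ofReal (hpow (n + 1) le_rfl))

end
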